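/- arXiv:0903.1361 — 3 statements merged into one kernel-verified Lean document; each statement's English description precedes it below -/
import Mathlib

section
/- For n₁, n₂ ∈ ℕ and p₁, p₂ ∈ (0,1) with p₁ > 0, the binomial distribution b_{n₁,p₁} is stochastically smaller than b_{n₂,p₂} if and only if n₁ ≤ n₂ and (1-p₁)^{n₁} ≥ (1-p₂)^{n₂}. -/
/-!
Necessity is read off at `k = n₁`, where `b_{n₁,p₁}` still has mass `p₁^{n₁} > 0`, and at `k = 1`.
For sufficiency, tails of `b_{n,p}` increase with `p`, so it is enough to show that with the mass
`c = (1-p)^n` at `0` held fixed, i.e. `p = 1 - c^{1/n}`, the tails increase with `n`. For the step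
from `n` to `n + 1` put `x = c^{1/(n(n+1))}` and compare the tails of `b_{n+1, 1-x^n}` and
`b_{n, 1-x^(n+1)}` as functions of `x ∈ [0, 1]`: their difference vanishes at both ends, and its
derivative is first nonnegative and then nonpositive, because the ratio
`x(1-x^n)/(1-x^(n+1))` increases.
-/

open Finset

/-- The binomial weight `b_{n,p}({k}) = C(n,k) p^k (1-p)^{n-k}`. -/
noncomputable def binomPMF (n : ℕ) (p : ℝ) (k : ℕ) : ℝ :=
  (n.choose k : ℝ) * p ^ k * (1 - p) ^ (n - k)

noncomputable def binomTail (n : ℕ) (p : ℝ) (k : ℕ) : ℝ :=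
  ∑ j ∈ Icc k n, binomPMF n p j

noncomputable def binomTailDeriv (n : ℕ) (p : ℝ) (k : ℕ) : ℝ :=
  k * n.choose k * p ^ (k - 1) * (1 - p) ^ (n - k)

section

variable {n k : ℕ} {p : ℝ}

lemma binomPMF_nonneg (hp₀ : 0 ≤ p) (hp₁ : p ≤ 1) (j : ℕ) : 0 ≤ binomPMF n p j := by
  have : 0 ≤ 1 - p := sub_nonneg.2 hp₁
  unfold binomPMF
  positivity

lemma binomPMF_eq_zero_of_lt (h : n < k) : binomPMF n p k = 0 := by
  simp [binomPMF, Nat.choose_eq_zero_of_lt h]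

lemma tsum_ite_le_binomPMF (n k : ℕ) (p : ℝ) :
    (∑' j : ℕ, if k ≤ j then binomPMF n p j else 0) = binomTail n p k := by
  rw [binomTail, tsum_eq_sum (s := Icc k n)]
  · exact sum_congr rfl fun j hj => if_pos (mem_Icc.1 hj).1
  · intro j hj
    rw [mem_Icc, not_and_or, not_le, not_le] at hj
    rcases hj with hj | hj
    · exact if_neg (not_le.2 hj)
    · simp [binomPMF_eq_zero_of_lt hj]

lemma binomTail_nonneg (hp₀ : 0 ≤ p) (hp₁ : p ≤ 1) : 0 ≤ binomTail n p k :=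
  sum_nonneg fun j _ => binomPMF_nonneg hp₀ hp₁ j

lemma binomTail_eq_zero_of_lt (h : n < k) : binomTail n p k = 0 := by
  rw [binomTail, Icc_eq_empty_of_lt h, sum_empty]

lemma binomTail_zero (n : ℕ) (p : ℝ) : binomTail n p 0 = 1 := by
  have h := add_pow p (1 - p) n
  rw [add_sub_cancel, one_pow] at h
  rw [binomTail, ← Nat.range_succ_eq_Icc_zero, h]
  exact sum_congr rfl fun j _ => by rw [binomPMF]; ring

lemma binomTail_one (n : ℕ) (p : ℝ) : binomTail n p 1 = 1 - (1 - p) ^ n := by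
  have h := binomTail_zero n p
  rw [binomTail, Icc_eq_cons_Ioc n.zero_le, sum_cons, ← Icc_add_one_left_eq_Ioc, zero_add] at h
  have h₀ : binomPMF n p 0 = (1 - p) ^ n := by simp [binomPMF]
  rw [binomTail]
  linarith

lemma binomTail_of_prob_zero (hk : 0 < k) : binomTail n 0 k = 0 :=
  sum_eq_zero fun j hj => by
    simp [binomPMF, zero_pow (by have := (mem_Icc.1 hj).1; omega : j ≠ 0)]

lemma binomTail_of_prob_one (hk : k ≤ n) : binomTail n 1 k = 1 := by
  rw [binomTail, sum_eq_single_of_mem n (mem_Icc.2 ⟨hk, le_rfl⟩)]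
  · simp [binomPMF]
  · intro j hj hjn
    simp [binomPMF, Nat.sub_ne_zero_of_lt (lt_of_le_of_ne (mem_Icc.1 hj).2 hjn)]

lemma hasDerivAt_binomPMF (n j : ℕ) (p : ℝ) :
    HasDerivAt (fun p => binomPMF n p j) (binomTailDeriv n p j - binomTailDeriv n p (j + 1)) p := by
  have hpow := ((hasDerivAt_pow j p).mul
    (((hasDerivAt_id p).const_sub 1).pow (n - j))).const_mul (n.choose j : ℝ)
  have hchoose : ((n.choose (j + 1) * (j + 1) : ℕ) : ℝ) = ((n.choose j * (n - j) : ℕ) : ℝ) := by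
    rw [Nat.choose_succ_right_eq]
  push_cast at hchoose
  simp only [binomPMF, id, Pi.mul_apply, Pi.pow_apply, mul_assoc] at hpow ⊢
  refine hpow.congr_deriv ?_
  simp only [binomTailDeriv, Nat.add_sub_cancel, show n - (j + 1) = n - j - 1 by omega]
  push_cast
  linear_combination (p ^ j * (1 - p) ^ (n - j - 1)) * hchoose

lemma hasDerivAt_binomTail (n k : ℕ) (p : ℝ) :
    HasDerivAt (fun p => binomTail n p k) (binomTailDeriv n p k) p := by
  rcases le_or_gt k n with hk | hk
  · refine (HasDerivAt.fun_sum fun j (_ : j ∈ Icc k n) => hasDerivAt_binomPMF n j p).congr_deriv ?_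
    have hD : binomTailDeriv n p (n + 1) = 0 := by simp [binomTailDeriv]
    rw [← neg_inj, ← sum_neg_distrib]
    simp only [neg_sub]
    rw [sum_Icc_sub hk, hD, zero_sub]
  · have hD : binomTailDeriv n p k = 0 := by simp [binomTailDeriv, Nat.choose_eq_zero_of_lt hk]
    simp only [hD, binomTail_eq_zero_of_lt hk]
    exact hasDerivAt_const p 0

lemma binomTail_self (n : ℕ) (p : ℝ) : binomTail n p n = p ^ n := by
  simp [binomTail, binomPMF]

lemma binomTailDeriv_nonneg (hp₀ : 0 ≤ p) (hp₁ : p ≤ 1) : 0 ≤ binomTailDeriv n p k := by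
  have : 0 ≤ 1 - p := sub_nonneg.2 hp₁
  unfold binomTailDeriv
  positivity

lemma binomTail_monotoneOn (n k : ℕ) : MonotoneOn (fun p => binomTail n p k) (Set.Icc 0 1) := by
  have hdiff : Differentiable ℝ (fun p => binomTail n p k) :=
    fun p => (hasDerivAt_binomTail n k p).differentiableAt
  refine monotoneOn_of_deriv_nonneg (convex_Icc 0 1) hdiff.continuous.continuousOn
    hdiff.differentiableOn fun p hp => ?_
  rw [interior_Icc] at hp
  rw [(hasDerivAt_binomTail n k p).deriv]
  exact binomTailDeriv_nonneg hp.1.le hp.2.le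

end

/- Monotonicity of `x (1 - x^n) / (1 - x^(n+1)) = 1 - 1 / (1 + x + ⋯ + x^n)` on `[0, 1]`,
cleared of denominators. -/
lemma sub_pow_succ_mul_one_sub_pow_succ_le {u v : ℝ} (n : ℕ) (hu : 0 ≤ u) (huv : u ≤ v)
    (hv : v ≤ 1) :
    (u - u ^ (n + 1)) * (1 - v ^ (n + 1)) ≤ (v - v ^ (n + 1)) * (1 - u ^ (n + 1)) := by
  have hS : ∑ i ∈ range (n + 1), u ^ i ≤ ∑ i ∈ range (n + 1), v ^ i :=
    sum_le_sum fun i _ => pow_le_pow_left₀ hu huv i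
  have hSu := geom_sum_mul_neg u (n + 1)
  have hSv := geom_sum_mul_neg v (n + 1)
  have key : (v - v ^ (n + 1)) * (1 - u ^ (n + 1)) - (u - u ^ (n + 1)) * (1 - v ^ (n + 1))
      = (1 - u) * (1 - v) * (∑ i ∈ range (n + 1), v ^ i - ∑ i ∈ range (n + 1), u ^ i) := by
    linear_combination (1 - v) * hSu - (1 - u) * hSv
  have : 0 ≤ (1 - u) * (1 - v) := mul_nonneg (by linarith) (by linarith)
  nlinarith [mul_nonneg this (sub_nonneg.2 hS)]

lemma mul_one_sub_pow_succ_pow_le_of_le {u v α β : ℝ} (n b : ℕ) (hu : 0 ≤ u) (huv : u ≤ v)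
    (hv : v ≤ 1) (hβ : 0 ≤ β) (h : α * (1 - u ^ (n + 1)) ^ b ≤ β * (u - u ^ (n + 1)) ^ b) :
    α * (1 - v ^ (n + 1)) ^ b ≤ β * (v - v ^ (n + 1)) ^ b := by
  rcases (huv.trans hv).eq_or_lt with rfl | hu₁
  · rwa [le_antisymm hv huv]
  have hgu : 0 < (1 - u ^ (n + 1)) ^ b :=
    pow_pos (sub_pos.2 (pow_lt_one₀ hu hu₁ n.succ_ne_zero)) b
  have hgv : 0 ≤ (1 - v ^ (n + 1)) ^ b :=
    pow_nonneg (sub_nonneg.2 (pow_le_one₀ (hu.trans huv) hv)) b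
  have hfu : 0 ≤ u - u ^ (n + 1) :=
    sub_nonneg.2 (pow_le_of_le_one hu hu₁.le n.succ_ne_zero)
  have hcross : (u - u ^ (n + 1)) ^ b * (1 - v ^ (n + 1)) ^ b
      ≤ (v - v ^ (n + 1)) ^ b * (1 - u ^ (n + 1)) ^ b := by
    rw [← mul_pow, ← mul_pow]
    exact pow_le_pow_left₀ (mul_nonneg hfu (sub_nonneg.2 (pow_le_one₀ (hu.trans huv) hv)))
      (sub_pow_succ_mul_one_sub_pow_succ_le n hu huv hv) b
  refine le_of_mul_le_mul_right ?_ hgu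
  calc α * (1 - v ^ (n + 1)) ^ b * (1 - u ^ (n + 1)) ^ b
      = α * (1 - u ^ (n + 1)) ^ b * (1 - v ^ (n + 1)) ^ b := by ring
    _ ≤ β * (u - u ^ (n + 1)) ^ b * (1 - v ^ (n + 1)) ^ b := mul_le_mul_of_nonneg_right h hgv
    _ ≤ β * (v - v ^ (n + 1)) ^ b * (1 - u ^ (n + 1)) ^ b := by
      rw [mul_assoc, mul_assoc]; exact mul_le_mul_of_nonneg_left hcross hβ

lemma nonneg_of_deriv_changes_sign_once {f : ℝ → ℝ} {a b x : ℝ}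
    (hf : ContinuousOn f (Set.Icc a b)) (hf' : DifferentiableOn ℝ f (Set.Ioo a b))
    (ha : 0 ≤ f a) (hb : 0 ≤ f b) (P : ℝ → Prop)
    (hP : ∀ y ∈ Set.Ioo a b, ∀ z ∈ Set.Ioo a b, y ≤ z → P y → P z)
    (hpos : ∀ y ∈ Set.Ioo a b, ¬ P y → 0 ≤ deriv f y)
    (hneg : ∀ y ∈ Set.Ioo a b, P y → deriv f y ≤ 0) (hx : x ∈ Set.Icc a b) : 0 ≤ f x := by
  by_cases h : ∃ y ∈ Set.Ioo a x, P y
  · obtain ⟨y, hy, hPy⟩ := h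
    have hanti : AntitoneOn f (Set.Icc x b) := by
      refine antitoneOn_of_deriv_nonpos (convex_Icc x b) (hf.mono (Set.Icc_subset_Icc_left hx.1))
        (hf'.mono ?_) fun z hz => ?_
      · rw [interior_Icc]; exact Set.Ioo_subset_Ioo_left hx.1
      rw [interior_Icc] at hz
      have hyb : y ∈ Set.Ioo a b := ⟨hy.1, hy.2.trans_le (hz.1.le.trans hz.2.le)⟩
      have hzb : z ∈ Set.Ioo a b := ⟨hy.1.trans (hy.2.trans hz.1), hz.2⟩
      exact hneg z hzb (hP y hyb z hzb (hy.2.trans hz.1).le hPy)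
    exact hb.trans (hanti ⟨le_rfl, hx.2⟩ ⟨hx.2, le_rfl⟩ hx.2)
  · push Not at h
    have hmono : MonotoneOn f (Set.Icc a x) := by
      refine monotoneOn_of_deriv_nonneg (convex_Icc a x) (hf.mono (Set.Icc_subset_Icc_right hx.2))
        (hf'.mono ?_) fun z hz => ?_
      · rw [interior_Icc]; exact Set.Ioo_subset_Ioo_right hx.2
      rw [interior_Icc] at hz
      exact hpos z ⟨hz.1, hz.2.trans_le hx.2⟩ (h z hz)
    exact ha.trans (hmono ⟨le_rfl, hx.1⟩ ⟨hx.1, le_rfl⟩ hx.1)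

/- Stated with `n = a + b + 1` and `k = b + 1`, so that no exponent involves truncated
subtraction. -/
lemma hasDerivAt_binomTail_succ_sub (a b : ℕ) (x : ℝ) :
    HasDerivAt (fun x => binomTail (a + b + 1 + 1) (1 - x ^ (a + b + 1)) (b + 1)
        - binomTail (a + b + 1) (1 - x ^ (a + b + 1 + 1)) (b + 1))
      (((b : ℝ) + 1) * ((a + b + 2).choose (b + 1) : ℝ) * x ^ ((a + b + 2) * a + (a + b + 1)) *
        (((a : ℝ) + 1) * (1 - x ^ (a + b + 2)) ^ b - ((a : ℝ) + b + 1) * (x - x ^ (a + b + 2)) ^ b))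
      x := by
  have h₁ := (hasDerivAt_binomTail (a + b + 1 + 1) (b + 1) _).comp x
    ((hasDerivAt_pow (a + b + 1) x).const_sub 1)
  have h₂ := (hasDerivAt_binomTail (a + b + 1) (b + 1) _).comp x
    ((hasDerivAt_pow (a + b + 1 + 1) x).const_sub 1)
  refine (h₁.sub h₂).congr_deriv ?_
  have hchoose := Nat.choose_mul_succ_eq (a + b + 1) (b + 1)
  rw [show a + b + 1 + 1 - (b + 1) = a + 1 by omega] at hchoose
  replace hchoose := congrArg (Nat.cast (R := ℝ)) hchoose
  simp only [binomTailDeriv, Nat.add_sub_cancel, show a + b + 1 + 1 - (b + 1) = a + 1 by omega,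
    show a + b + 1 - (b + 1) = a by omega, sub_sub_cancel, show a + b + 1 + 1 = a + b + 2 by omega]
  rw [show x - x ^ (a + b + 2) = x * (1 - x ^ (a + b + 1)) by ring, mul_pow, ← pow_mul, ← pow_mul]
  push_cast at hchoose ⊢
  linear_combination
    ((b + 1 : ℝ) * x ^ ((a + b + 2) * a + (a + b + 1)) * (1 - x ^ (a + b + 2)) ^ b) * hchoose

lemma binomTail_le_binomTail_succ (n k : ℕ) {u : ℝ} (hu₀ : 0 ≤ u) (hu₁ : u ≤ 1) :
    binomTail n (1 - u ^ (n + 1)) k ≤ binomTail (n + 1) (1 - u ^ n) k := by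
  rcases Nat.eq_zero_or_pos k with rfl | hk
  · rw [binomTail_zero, binomTail_zero]
  rcases lt_or_ge n k with hnk | hkn
  · rw [binomTail_eq_zero_of_lt hnk]
    exact binomTail_nonneg (sub_nonneg.2 (pow_le_one₀ hu₀ hu₁))
      (sub_le_self _ (pow_nonneg hu₀ n))
  obtain ⟨b, rfl⟩ : ∃ b, k = b + 1 := ⟨k - 1, by omega⟩
  obtain ⟨a, rfl⟩ : ∃ a, n = a + b + 1 := ⟨n - b - 1, by omega⟩
  set H : ℝ → ℝ := fun x => binomTail (a + b + 1 + 1) (1 - x ^ (a + b + 1)) (b + 1)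
      - binomTail (a + b + 1) (1 - x ^ (a + b + 1 + 1)) (b + 1)
  have hH := hasDerivAt_binomTail_succ_sub a b
  have hdiff : Differentiable ℝ H := fun x => (hH x).differentiableAt
  suffices 0 ≤ H u from sub_nonneg.1 this
  -- `H` vanishes at `0` and `1`, and `H'` has the sign of a factor that changes sign only once.
  refine nonneg_of_deriv_changes_sign_once hdiff.continuous.continuousOn hdiff.differentiableOn
    ?_ ?_ (fun x => ((a : ℝ) + 1) * (1 - x ^ (a + b + 2)) ^ b
      ≤ ((a : ℝ) + b + 1) * (x - x ^ (a + b + 2)) ^ b)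
    (fun y hy z hz hyz hPy => mul_one_sub_pow_succ_pow_le_of_le (a + b + 1) b hy.1.le hyz hz.2.le
      (by positivity) hPy) (fun x hx hPx => ?_) (fun x hx hPx => ?_) ⟨hu₀, hu₁⟩
  · simp only [H, ne_eq, Nat.add_one_ne_zero, not_false_eq_true, zero_pow, sub_zero,
      binomTail_of_prob_one (show b + 1 ≤ a + b + 1 by omega),
      binomTail_of_prob_one (show b + 1 ≤ a + b + 1 + 1 by omega), sub_self, le_refl]
  · simp only [H, one_pow, sub_self, binomTail_of_prob_zero b.succ_pos, le_refl]
  · rw [(hH x).deriv]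
    have : 0 ≤ x := hx.1.le
    exact mul_nonneg (by positivity) (sub_nonneg.2 (not_le.1 hPx).le)
  · rw [(hH x).deriv]
    have : 0 ≤ x := hx.1.le
    exact mul_nonpos_of_nonneg_of_nonpos (by positivity) (sub_nonpos.2 hPx)

lemma binomTail_monotoneOn_one_sub_rpow_inv {c : ℝ} (hc₀ : 0 ≤ c) (hc₁ : c ≤ 1) (k : ℕ) :
    MonotoneOn (fun n : ℕ => binomTail n (1 - c ^ (n : ℝ)⁻¹) k) {n | 1 ≤ n} := by
  refine monotoneOn_nat_Ici_of_le_succ fun n hn => ?_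
  have hn₀ : (n : ℝ) ≠ 0 := by positivity
  set u := c ^ ((n : ℝ) * (n + 1))⁻¹
  have hu : ∀ m : ℕ, u ^ m = c ^ ((m : ℝ) / (n * (n + 1))) := fun m => by
    rw [← Real.rpow_natCast, ← Real.rpow_mul hc₀, inv_mul_eq_div]
  have hu_succ : u ^ (n + 1) = c ^ (n : ℝ)⁻¹ := by
    rw [hu]; congr 1; push_cast; field_simp
  have hu_self : u ^ n = c ^ ((n + 1 : ℕ) : ℝ)⁻¹ := by
    rw [hu]; congr 1; push_cast; field_simp
  have := binomTail_le_binomTail_succ n k (u := u) (Real.rpow_nonneg hc₀ _)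
    (Real.rpow_le_one hc₀ hc₁ (by positivity))
  rwa [hu_succ, hu_self] at this

lemma binomTail_le_of_le_of_one_sub_pow_le {n₁ n₂ : ℕ} {p₁ p₂ : ℝ} (hn₁ : 1 ≤ n₁)
    (hle : n₁ ≤ n₂) (hp₁₀ : 0 ≤ p₁) (hp₁₁ : p₁ ≤ 1) (hp₂₀ : 0 ≤ p₂) (hp₂₁ : p₂ ≤ 1)
    (hpow : (1 - p₂) ^ n₂ ≤ (1 - p₁) ^ n₁) (k : ℕ) :
    binomTail n₁ p₁ k ≤ binomTail n₂ p₂ k := by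
  set c := (1 - p₁) ^ n₁
  have hq₁ : 0 ≤ 1 - p₁ := sub_nonneg.2 hp₁₁
  have hq₂ : 0 ≤ 1 - p₂ := sub_nonneg.2 hp₂₁
  have hc₀ : 0 ≤ c := pow_nonneg hq₁ n₁
  have hc₁ : c ≤ 1 := pow_le_one₀ hq₁ (by linarith)
  have hp₁c : 1 - c ^ (n₁ : ℝ)⁻¹ = p₁ := by
    rw [Real.pow_rpow_inv_natCast hq₁ (by omega)]; ring
  have hp₂c : 1 - c ^ (n₂ : ℝ)⁻¹ ≤ p₂ := by
    have := Real.rpow_le_rpow (pow_nonneg hq₂ n₂) hpow (by positivity : (0 : ℝ) ≤ (n₂ : ℝ)⁻¹)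
    rw [Real.pow_rpow_inv_natCast hq₂ (by omega)] at this
    linarith
  calc binomTail n₁ p₁ k = binomTail n₁ (1 - c ^ (n₁ : ℝ)⁻¹) k := by rw [hp₁c]
    _ ≤ binomTail n₂ (1 - c ^ (n₂ : ℝ)⁻¹) k :=
      binomTail_monotoneOn_one_sub_rpow_inv hc₀ hc₁ k hn₁ (hn₁.trans hle) hle
    _ ≤ binomTail n₂ p₂ k :=
      binomTail_monotoneOn n₂ k
        ⟨sub_nonneg.2 (Real.rpow_le_one hc₀ hc₁ (by positivity)), by linarith⟩ ⟨hp₂₀, hp₂₁⟩ hp₂c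

theorem binomial_stochastic_order_iff_general (n₁ n₂ : ℕ) (p₁ p₂ : ℝ)
    (hn₁ : 1 ≤ n₁)
    (h₁ : p₁ ∈ Set.Ioo (0:ℝ) 1) (h₂ : p₂ ∈ Set.Ioo (0:ℝ) 1) :
    (∀ k : ℕ, (∑' j : ℕ, if k ≤ j then binomPMF n₁ p₁ j else 0)
        ≤ ∑' j : ℕ, if k ≤ j then binomPMF n₂ p₂ j else 0)
      ↔ n₁ ≤ n₂ ∧ (1 - p₂) ^ n₂ ≤ (1 - p₁) ^ n₁ := by
  simp only [tsum_ite_le_binomPMF]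
  refine ⟨fun h => ⟨?_, ?_⟩, fun ⟨hle, hpow⟩ =>
    binomTail_le_of_le_of_one_sub_pow_le hn₁ hle h₁.1.le h₁.2.le h₂.1.le h₂.2.le hpow⟩
  · by_contra! hlt
    have := h n₁
    rw [binomTail_self, binomTail_eq_zero_of_lt hlt] at this
    exact (pow_pos h₁.1 n₁).not_ge this
  · have := h 1
    rw [binomTail_one, binomTail_one] at this
    linarith

theorem binomial_stochastic_order_iff (n₁ n₂ : ℕ) (p₁ p₂ : ℝ)
    (hn₁ : 1 ≤ n₁) (hn₂ : 1 ≤ n₂)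
    (h₁ : p₁ ∈ Set.Ioo (0:ℝ) 1) (h₂ : p₂ ∈ Set.Ioo (0:ℝ) 1) :
    (∀ k : ℕ, (∑' j : ℕ, if k ≤ j then binomPMF n₁ p₁ j else 0)
        ≤ ∑' j : ℕ, if k ≤ j then binomPMF n₂ p₂ j else 0)
      ↔ n₁ ≤ n₂ ∧ (1 - p₂) ^ n₂ ≤ (1 - p₁) ^ n₁ :=
  binomial_stochastic_order_iff_general n₁ n₂ p₁ p₂ hn₁ h₁ h₂
end

section
/- For n₁, n₂ ∈ ℕ and p₁, p₂ ∈ [0,1], the binomial distributions b_{n₁,p₁} and b_{n₂,p₂} have a half-monotone likelihood ratio: assuming w.l.o.g. n₁ ≤ n₂ and p₁,p₂ ∈ (0,1), the ratio ℓ(k) = b_{n₁,p₁}({k})/b_{n₂,p₂}({k}) for k = 0,...,n₁ is first monotone increasing and then monotone decreasing (i.e., unimodal). -/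
/-!
The consecutive ratio of a binomial weight is `b_{n,p}(k+1) / b_{n,p}(k) = (n - k)/(k + 1) · p/(1 - p)`,
so the likelihood ratio `ℓ = b_{n₁,p₁} / b_{n₂,p₂}` satisfies `ℓ(k+1) = ℓ(k) · r(k)` with
`r(k) = (n₁ - k)/(n₂ - k) · c` for a constant `c > 0`. For `n₁ ≤ n₂` the factor `r` is decreasing,
so once `ℓ` takes a downward step (`r < 1`) every later step is downward too.
-/

open Set

def UnimodalOn {α : Type*} [Preorder α] (f : ℕ → α) (n : ℕ) : Prop :=
  ∃ k₀ ≤ n, MonotoneOn f (Icc 0 k₀) ∧ AntitoneOn f (Icc k₀ n)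

section Unimodal

variable {α : Type*}

lemma monotoneOn_Icc_of_le_succ [Preorder α] {f : ℕ → α} {a b : ℕ}
    (hf : ∀ k, a ≤ k → k < b → f k ≤ f (k + 1)) : MonotoneOn f (Icc a b) :=
  monotoneOn_of_le_succ ordConnected_Icc fun k _ hk hk' => by
    rw [Order.succ_eq_add_one] at hk' ⊢
    exact hf k hk.1 hk'.2

lemma antitoneOn_Icc_of_succ_le [Preorder α] {f : ℕ → α} {a b : ℕ}
    (hf : ∀ k, a ≤ k → k < b → f (k + 1) ≤ f k) : AntitoneOn f (Icc a b) :=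
  monotoneOn_Icc_of_le_succ (α := αᵒᵈ) hf

theorem unimodalOn_of_lt_imp_le [LinearOrder α] {f : ℕ → α} {n : ℕ}
    (h : ∀ j k, j ≤ k → k < n → f (j + 1) < f j → f (k + 1) ≤ f k) : UnimodalOn f n := by
  classical
  by_cases hdec : ∃ k < n, f (k + 1) < f k
  · obtain ⟨hk₀n, hk₀⟩ := Nat.find_spec hdec
    refine ⟨Nat.find hdec, hk₀n.le, monotoneOn_Icc_of_le_succ fun k _ hk => ?_,
      antitoneOn_Icc_of_succ_le fun k hk hkn => h _ k hk hkn hk₀⟩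
    exact not_lt.1 fun hlt => Nat.find_min hdec hk ⟨hk.trans hk₀n, hlt⟩
  · push Not at hdec
    refine ⟨n, le_rfl, monotoneOn_Icc_of_le_succ fun k _ hk => hdec k hk, ?_⟩
    simp

theorem unimodalOn_of_mul_antitoneOn [Field α] [LinearOrder α] [IsStrictOrderedRing α]
    {f r : ℕ → α} {n : ℕ} (hf : ∀ k ≤ n, 0 < f k) (hfr : ∀ k < n, f (k + 1) = f k * r k)
    (hr : AntitoneOn r (Iio n)) : UnimodalOn f n := by
  refine unimodalOn_of_lt_imp_le fun j k hjk hk hdec => ?_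
  have hrj : r j < 1 := by
    rw [hfr j (hjk.trans_lt hk)] at hdec
    exact (mul_lt_iff_lt_one_right (hf j (by omega))).1 hdec
  rw [hfr k hk]
  exact mul_le_of_le_one_right (hf k hk.le).le ((hr (hjk.trans_lt hk) hk hjk).trans hrj.le)

end Unimodal

lemma sub_div_sub_le_sub_div_sub {α : Type*} [Field α] [LinearOrder α] [IsStrictOrderedRing α]
    {a b x y : α} (hab : a ≤ b) (hxy : x ≤ y) (hy : y < b) :
    (a - y) / (b - y) ≤ (a - x) / (b - x) := by
  rw [div_le_div_iff₀ (by linarith) (by linarith)]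
  nlinarith

section Binomial

variable {n k : ℕ} {p : ℝ}

lemma binomPMF_pos (hk : k ≤ n) (hp : p ∈ Ioo 0 1) : 0 < binomPMF n p k := by
  have := hp.1
  have := sub_pos.2 hp.2
  have := Nat.choose_pos hk
  unfold binomPMF
  positivity

lemma binomPMF_succ (hk : k < n) (hp : p ≠ 1) :
    binomPMF n p (k + 1) = binomPMF n p k * ((n - k) / (k + 1) * (p / (1 - p))) := by
  have hchoose : (n.choose (k + 1) : ℝ) * (k + 1) = n.choose k * (n - k) := by
    rw [← Nat.cast_sub hk.le]
    exact_mod_cast Nat.choose_succ_right_eq n k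
  have hpow : (1 - p) ^ (n - k) = (1 - p) ^ (n - (k + 1)) * (1 - p) := by
    rw [← pow_succ]
    congr 1
    omega
  have : 1 - p ≠ 0 := sub_ne_zero.2 hp.symm
  unfold binomPMF
  rw [hpow]
  field_simp
  linear_combination p ^ (k + 1) * hchoose

end Binomial

/-- Binomial distributions have a half-monotone (unimodal) likelihood ratio. -/
theorem binomial_half_monotone_likelihood_ratio (n₁ n₂ : ℕ) (p₁ p₂ : ℝ)
    (hn : n₁ ≤ n₂) (h₁ : p₁ ∈ Set.Ioo (0:ℝ) 1) (h₂ : p₂ ∈ Set.Ioo (0:ℝ) 1) :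
    ∃ k₀ ≤ n₁,
      MonotoneOn (fun k : ℕ => binomPMF n₁ p₁ k / binomPMF n₂ p₂ k) (Set.Icc 0 k₀) ∧
      AntitoneOn (fun k : ℕ => binomPMF n₁ p₁ k / binomPMF n₂ p₂ k) (Set.Icc k₀ n₁) := by
  have hq₁ : 0 < 1 - p₁ := sub_pos.2 h₁.2
  have hq₂ : 0 < 1 - p₂ := sub_pos.2 h₂.2
  have := h₁.1
  have := h₂.1
  set c := p₁ / (1 - p₁) / (p₂ / (1 - p₂)) with hc_def
  have hc : 0 < c := by positivity
  refine unimodalOn_of_mul_antitoneOn (r := fun k => (n₁ - k : ℝ) / (n₂ - k) * c)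
    (fun k hk => div_pos (binomPMF_pos hk h₁) (binomPMF_pos (hk.trans hn) h₂))
    (fun k hk => ?_) (fun j _ k hk hjk => ?_)
  · rw [binomPMF_succ hk h₁.2.ne, binomPMF_succ (hk.trans_le hn) h₂.2.ne, hc_def]
    field_simp
  · have hkn : (k : ℝ) < n₂ := by exact_mod_cast (mem_Iio.1 hk).trans_le hn
    have hn' : (n₁ : ℝ) ≤ n₂ := by exact_mod_cast hn
    exact mul_le_mul_of_nonneg_right
      (sub_div_sub_le_sub_div_sub hn' (by exact_mod_cast hjk) hkn) hc.le
end

section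
/- For λ > 0, r > 0, and p ∈ (0,1), the Poisson distribution Poi_λ is stochastically smaller than the negative binomial distribution b⁻_{r,p} if and only if e^{-λ} ≥ p^r. -/
/-!
The negative binomial weights satisfy `Q (j + 1) = Q j · (r + j)(1 - p)/(j + 1)` and the Poisson
weights `P (j + 1) = P j · λ/(j + 1)`; the first factor overtakes the second once and for all.
So once `Q` exceeds `P` it stays above it, and `p ^ r ≤ e^{-λ}` says `Q 0 ≤ P 0`: the two mass
functions cross exactly once, which together with equal total mass gives the stochastic order.
Conversely, the order at `k = 1` reads `1 - e^{-λ} ≤ 1 - p ^ r`.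
-/

/-- The Poisson weight `Poi_λ({k}) = e^{-λ} λ^k / k!`. -/
noncomputable def poissonPMF (l : ℝ) (k : ℕ) : ℝ :=
  Real.exp (-l) * l ^ k / (Nat.factorial k)

/-- The negative binomial weight `b⁻_{r,p}({k}) = C(r+k-1,k) p^r (1-p)^k`,
where `C(r+k-1,k) = ∏_{l=1}^k (r+l-1)/l`. -/
noncomputable def negBinomPMF (r p : ℝ) (k : ℕ) : ℝ :=
  (∏ l ∈ Finset.range k, (r + l) / (l + 1)) * p ^ r * (1 - p) ^ k

open Finset

theorem HasSum.ite_le_sub_sum_range {α : Type*} [AddCommGroup α] [TopologicalSpace α]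
    [IsTopologicalAddGroup α] {f : ℕ → α} {a : α} (hf : HasSum f a) (k : ℕ) :
    HasSum (fun j => if k ≤ j then f j else 0) (a - ∑ j ∈ range k, f j) := by
  have hhead : HasSum _ _ := hasSum_sum_of_ne_finset_zero (f := fun j => if j < k then f j else 0)
    (s := range k) fun j hj => by simp_all
  rw [sum_congr rfl fun j hj => if_pos (mem_range.1 hj)] at hhead
  convert hf.sub hhead using 1
  ext j
  split_ifs <;> first | omega | simp

def SingleCrossing (f g : ℕ → ℝ) : Prop :=
  ∀ i j, i ≤ j → f i < g i → f j ≤ g j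

theorem SingleCrossing.tsum_tail_le {f g : ℕ → ℝ} {a : ℝ} (hfg : SingleCrossing f g)
    (hf : HasSum f a) (hg : HasSum g a) (k : ℕ) :
    (∑' j, if k ≤ j then f j else 0) ≤ ∑' j, if k ≤ j then g j else 0 := by
  have hf_tail := hf.ite_le_sub_sum_range k
  have hg_tail := hg.ite_le_sub_sum_range k
  rw [hf_tail.tsum_eq, hg_tail.tsum_eq]
  by_cases hcross : ∃ i < k, f i < g i
  · obtain ⟨i, hik, hi⟩ := hcross
    refine hasSum_le (fun j => ?_) hf_tail hg_tail
    split_ifs with hkj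
    exacts [hfg i j (by omega) hi, le_rfl]
  · push Not at hcross
    have hhead : ∑ j ∈ range k, g j ≤ ∑ j ∈ range k, f j :=
      sum_le_sum fun j hj => hcross j (mem_range.1 hj)
    linarith

theorem singleCrossing_of_ratio {f g a b : ℕ → ℝ}
    (hf : ∀ j, f (j + 1) = f j * a j) (hg : ∀ j, g (j + 1) = g j * b j)
    (hf_nonneg : ∀ j, 0 ≤ f j) (hg_nonneg : ∀ j, 0 ≤ g j) (ha : ∀ j, 0 ≤ a j) (hb : ∀ j, 0 ≤ b j)
    (hab : ∀ i j, i ≤ j → a i < b i → a j ≤ b j) (h0 : g 0 ≤ f 0) : SingleCrossing f g := by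
  intro i j hij hi
  have hbelow : ∀ n, (∀ m < n, b m ≤ a m) → g n ≤ f n := by
    intro n hn
    induction n with
    | zero => exact h0
    | succ n ih =>
      rw [hf, hg]
      exact mul_le_mul (ih fun m hm => hn m (by omega)) (hn n n.lt_succ_self) (hb n)
        (hf_nonneg n)
  obtain ⟨m, hmi, hm⟩ : ∃ m < i, a m < b m := by
    by_contra! h
    exact (hbelow i h).not_gt hi
  induction j, hij using Nat.le_induction with
  | base => exact hi.le
  | succ n hin ih =>
    rw [hf, hg]
    exact mul_le_mul ih (hab m n (by omega) hm) (ha n) (hg_nonneg n)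

theorem hasSum_poissonPMF (l : ℝ) : HasSum (poissonPMF l) 1 := by
  have h := (NormedSpace.expSeries_div_hasSum_exp l).mul_left (Real.exp (-l))
  rw [← Real.exp_eq_exp_ℝ, ← Real.exp_add, neg_add_cancel, Real.exp_zero] at h
  simp only [← mul_div_assoc] at h
  exact h

theorem poissonPMF_nonneg {l : ℝ} (hl : 0 ≤ l) (k : ℕ) : 0 ≤ poissonPMF l k := by
  unfold poissonPMF
  positivity

theorem poissonPMF_succ (l : ℝ) (k : ℕ) :
    poissonPMF l (k + 1) = poissonPMF l k * (l / (k + 1)) := by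
  simp only [poissonPMF, Nat.factorial_succ, Nat.cast_mul, Nat.cast_succ, pow_succ]
  field_simp

theorem ascPochhammer_eval_eq_prod_range (r : ℝ) (k : ℕ) :
    (ascPochhammer ℝ k).eval r = ∏ l ∈ range k, (r + l) := by
  induction k with
  | zero => simp
  | succ k ih => rw [ascPochhammer_succ_eval, ih, prod_range_succ]

theorem prod_range_div_eq_ringChoose (r : ℝ) (k : ℕ) :
    ∏ l ∈ range k, (r + l) / (l + 1) = Ring.choose (r + k - 1) k := by
  rw [Ring.choose_eq_smul, Polynomial.descPochhammer_smeval_eq_ascPochhammer,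
    Polynomial.ascPochhammer_smeval_eq_eval, show r + k - 1 - k + 1 = r by ring,
    ascPochhammer_eval_eq_prod_range, prod_div_distrib, smul_eq_mul, div_eq_inv_mul]
  congr
  exact_mod_cast prod_range_add_one_eq_factorial k

/-- The total mass is `p ^ r` times the binomial series of `(1 - (1 - p)) ^ (-r)`. -/
theorem hasSum_negBinomPMF (r : ℝ) {p : ℝ} (hp : p ∈ Set.Ioo 0 1) :
    HasSum (negBinomPMF r p) 1 := by
  have hmem : 1 - p ∈ Metric.eball (0 : ℝ) 1 := by
    rw [← ENNReal.ofReal_one, Metric.eball_ofReal, Metric.mem_ball, dist_zero_right,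
      Real.norm_eq_abs, abs_lt]
    constructor <;> linarith [hp.1, hp.2]
  have h := ((Real.one_div_one_sub_rpow_hasFPowerSeriesOnBall_zero r).hasSum hmem).mul_right
    (p ^ r)
  simp only [FormalMultilinearSeries.ofScalars_apply_eq, zero_add, sub_sub_cancel, smul_eq_mul,
    one_div, inv_mul_cancel₀ (Real.rpow_pos_of_pos hp.1 r).ne'] at h
  have hpmf : negBinomPMF r p = fun k : ℕ => Ring.choose (r + k - 1) k * (1 - p) ^ k * p ^ r := by
    ext k
    rw [negBinomPMF, prod_range_div_eq_ringChoose]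
    ring
  rw [hpmf]
  exact h

theorem negBinomPMF_nonneg {r p : ℝ} (hr : 0 ≤ r) (hp : p ∈ Set.Icc 0 1) (k : ℕ) :
    0 ≤ negBinomPMF r p k := by
  have hp0 := hp.1
  have hq0 : 0 ≤ 1 - p := sub_nonneg.2 hp.2
  unfold negBinomPMF
  positivity

theorem negBinomPMF_succ (r p : ℝ) (k : ℕ) :
    negBinomPMF r p (k + 1) = negBinomPMF r p k * ((r + k) * (1 - p) / (k + 1)) := by
  simp only [negBinomPMF, prod_range_succ, pow_succ]
  ring

theorem poisson_le_negBinomial_iff (l r p : ℝ)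
    (hl : 0 < l) (hr : 0 < r) (hp : p ∈ Set.Ioo (0:ℝ) 1) :
    (∀ k : ℕ, (∑' j : ℕ, if k ≤ j then poissonPMF l j else 0)
        ≤ ∑' j : ℕ, if k ≤ j then negBinomPMF r p j else 0)
      ↔ p ^ r ≤ Real.exp (-l) := by
  have hP := hasSum_poissonPMF l
  have hQ := hasSum_negBinomPMF r hp
  have hP0 : poissonPMF l 0 = Real.exp (-l) := by simp [poissonPMF]
  have hQ0 : negBinomPMF r p 0 = p ^ r := by simp [negBinomPMF]
  constructor
  · intro h
    have h1 := h 1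
    rw [(hP.ite_le_sub_sum_range 1).tsum_eq, (hQ.ite_le_sub_sum_range 1).tsum_eq,
      sum_range_one, sum_range_one, hP0, hQ0] at h1
    linarith
  · intro h
    have hp' : 0 < 1 - p := sub_pos.2 hp.2
    refine (singleCrossing_of_ratio (poissonPMF_succ l) (negBinomPMF_succ r p)
      (poissonPMF_nonneg hl.le) (negBinomPMF_nonneg hr.le (Set.Ioo_subset_Icc_self hp))
      (fun j => by positivity) (fun j => by positivity) ?_ (hP0 ▸ hQ0 ▸ h)).tsum_tail_le hP hQ
    intro i j hij hi
    rw [div_lt_div_iff_of_pos_right (by positivity)] at hi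
    have : (r + i) * (1 - p) ≤ (r + j) * (1 - p) := by gcongr
    exact div_le_div_of_nonneg_right (by linarith) (by positivity)
end
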